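/- arXiv:2508.00666 — 3 statements merged into one kernel-verified Lean document; each statement's English description precedes it below -/
import Mathlib

section
/- Let -π ≤ a ≤ 0 ≤ b ≤ π with 0 < b - a < π, let h be a Koenigs map onto the angular sector S(a,b), and fix p ≥ 1. Then for every λ ∈ ℂ one has e^{λh} ∈ H^p if and only if λ = 0 or λ = ρ e^{iφ} for some ρ > 0 and φ ∈ [π/2 - a, 3π/2 - b]; that is, σ_p = i·closure(S(-a, π-b)). (Lemma 5.6(a), the Hardy-space sector computation.) -/
open MeasureTheory Set Complex Metric
open scoped ENNReal NNReal

noncomputable section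

/-- `h` is a Koenigs map onto `Ω`: an injective holomorphic map on the unit disk with image `Ω`. -/
def IsKoenigsMap (h : ℂ → ℂ) (Ω : Set ℂ) : Prop :=
  DifferentiableOn ℂ h (ball 0 1) ∧ InjOn h (ball 0 1) ∧ h '' ball 0 1 = Ω

/-- The open angular sector `S(α,β) = {w ≠ 0 : α < arg w < β}` (principal argument). -/
def sector (a b : ℝ) : Set ℂ :=
  {w : ℂ | w ≠ 0 ∧ a < Complex.arg w ∧ Complex.arg w < b}

/-- Membership in the Hardy space `H^p`:
`sup_{0 ≤ r < 1} ∫_0^{2π} |f(r e^{iθ})|^p dθ < ∞`. -/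
def MemHardy (p : ℝ) (f : ℂ → ℂ) : Prop :=
  (⨆ r ∈ Ico (0 : ℝ) 1,
    ∫⁻ θ in Ioc (0 : ℝ) (2 * Real.pi),
      (‖f ((r : ℂ) * Complex.exp ((θ : ℂ) * Complex.I))‖₊ : ℝ≥0∞) ^ p) < ⊤

/-!
If `λ = ρ e^{iφ}` with `φ ∈ [π/2 - a, 3π/2 - b]`, then `Re (λ w) ≤ 0` on `S(a,b)`, so
`|e^{λh}| ≤ 1`. Otherwise `Re (λ e^{iθ}) > 0` for some `θ ∈ (a,b)`. Since `e^{λh} ∈ H^p` iff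
`e^{pλh} ∈ H^1`, and the Cauchy formula bounds every `G ∈ H^1` by `|G z| (1 - |z|) ≤ C`, it
suffices to find points `z_t` with `h z_t = t^s e^{iθ}` and `1 - |z_t| ≳ 1/t`, where
`|e^{pλh}| = exp (κ t^s)` with `κ > 0`. They come from composing the holomorphic inverse of the
injective map `h` with a conformal map of the disk onto a subsector around the ray `arg = θ`,
which sends `(t-1)/(t+1)` to `t^s e^{iθ}`, and applying Schwarz–Pick to this self-map of the disk.
-/

open Filter Topology ComplexConjugate
open scoped Real

theorem re_ofReal_mul_exp_mul_exp (ρ φ θ : ℝ) :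
    ((ρ : ℂ) * exp (φ * I) * exp (θ * I)).re = ρ * Real.cos (φ + θ) := by
  rw [mul_assoc, ← Complex.exp_add, ← add_mul, ← ofReal_add, re_ofReal_mul, exp_ofReal_mul_I_re]

theorem forall_re_mul_exp_nonpos_iff {a b : ℝ} (hab : a < b) {lam : ℂ} :
    (∀ θ ∈ Ioo a b, (lam * exp (θ * I)).re ≤ 0) ↔
      lam = 0 ∨ ∃ ρ : ℝ, 0 < ρ ∧ ∃ φ : ℝ,
        π / 2 - a ≤ φ ∧ φ ≤ 3 * π / 2 - b ∧ lam = ρ * exp (φ * I) := by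
  constructor
  · intro H
    rcases eq_or_ne lam 0 with hlam | hlam
    · exact Or.inl hlam
    obtain ⟨φ, hφ, hlam_eq⟩ : ∃ φ ∈ Ico (π / 2 - a) (π / 2 - a + 2 * π),
        lam = ‖lam‖ * exp (φ * I) := by
      refine ⟨_, toIcoMod_mem_Ico Real.two_pi_pos (π / 2 - a) (arg lam), ?_⟩
      rw [← self_sub_toIcoDiv_zsmul]
      push_cast
      rw [exp_mul_I_periodic.sub_zsmul_eq, norm_mul_exp_arg_mul_I]
    refine Or.inr ⟨‖lam‖, norm_pos_iff.2 hlam, φ, hφ.1, ?_, hlam_eq⟩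
    by_contra! hφb
    -- otherwise `(φ + a, φ + b)` meets `(3π/2, 5π/2)`, where the cosine is positive
    obtain ⟨x, hx₁, hx₂⟩ := exists_between <|
      show max (φ + a) (3 * π / 2) < min (φ + b) (5 * π / 2) from
        max_lt (lt_min (by linarith) (by linarith [hφ.2]))
          (lt_min (by linarith) (by linarith [Real.pi_pos]))
    rw [max_lt_iff] at hx₁
    rw [lt_min_iff] at hx₂
    have hx := H (x - φ) ⟨by linarith, by linarith⟩
    rw [hlam_eq, re_ofReal_mul_exp_mul_exp, add_sub_cancel, ← Real.cos_sub_two_pi] at hx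
    have hcos : 0 < Real.cos (x - 2 * π) := Real.cos_pos_of_mem_Ioo ⟨by linarith, by linarith⟩
    exact (mul_pos (norm_pos_iff.2 hlam) hcos).not_ge hx
  · rintro (rfl | ⟨ρ, hρ, φ, hφa, hφb, rfl⟩) θ hθ
    · simp
    rw [re_ofReal_mul_exp_mul_exp]
    exact mul_nonpos_of_nonneg_of_nonpos hρ.le
      (Real.cos_nonpos_of_pi_div_two_le_of_le (by linarith [hθ.1]) (by linarith [hθ.2]))

theorem re_mul_nonpos_of_mem_sector {a b : ℝ} {lam w : ℂ}
    (H : ∀ θ ∈ Ioo a b, (lam * exp (θ * I)).re ≤ 0) (hw : w ∈ sector a b) :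
    (lam * w).re ≤ 0 := by
  rw [← norm_mul_exp_arg_mul_I w, mul_left_comm, re_ofReal_mul]
  exact mul_nonpos_of_nonneg_of_nonpos (norm_nonneg w) (H _ ⟨hw.2.1, hw.2.2⟩)

theorem memHardy_of_norm_le {p : ℝ} (hp : 0 ≤ p) {f : ℂ → ℂ} {C : ℝ}
    (hf : ∀ z ∈ ball (0 : ℂ) 1, ‖f z‖ ≤ C) : MemHardy p f := by
  unfold MemHardy
  refine lt_of_le_of_lt (iSup₂_le fun r hr => ?_) <|
    ENNReal.mul_lt_top (ENNReal.rpow_lt_top_of_nonneg hp (ENNReal.ofReal_ne_top (r := C)))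
      (measure_Ioc_lt_top : volume (Ioc (0 : ℝ) (2 * π)) < ⊤)
  rw [← setLIntegral_const]
  refine lintegral_mono fun θ => ENNReal.rpow_le_rpow ?_ hp
  rw [← enorm_eq_nnnorm, ← ofReal_norm]
  refine ENNReal.ofReal_le_ofReal (hf _ ?_)
  rw [← circleMap_zero, mem_ball_zero_iff, norm_circleMap_zero, abs_of_nonneg hr.1]
  exact hr.2

theorem memHardy_exp_iff {p : ℝ} (hp : 0 < p) {F : ℂ → ℂ} :
    MemHardy p (fun z => exp (F z)) ↔ MemHardy 1 (fun z => exp (p * F z)) := by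
  have key : ∀ w, (‖exp (p * w)‖₊ : ℝ≥0∞) ^ (1 : ℝ) = (‖exp w‖₊ : ℝ≥0∞) ^ p := by
    intro w
    rw [ENNReal.rpow_one, ← enorm_eq_nnnorm, ← enorm_eq_nnnorm, ← ofReal_norm, ← ofReal_norm,
      ENNReal.ofReal_rpow_of_nonneg (norm_nonneg _) hp.le, norm_exp, norm_exp, re_ofReal_mul,
      mul_comm, Real.exp_mul]
  simp only [MemHardy, key]

theorem norm_le_mul_integral_norm_circleMap {G : ℂ → ℂ} {r : ℝ}
    (hG : DifferentiableOn ℂ G (closedBall 0 r)) {z : ℂ} (hz : ‖z‖ < r) :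
    ‖G z‖ ≤ r / (2 * π * (r - ‖z‖)) * ∫ θ in 0..2 * π, ‖G (circleMap 0 r θ)‖ := by
  have hr : 0 < r - ‖z‖ := sub_pos.2 hz
  have hr₀ : 0 < r := (norm_nonneg z).trans_lt hz
  have hcont : Continuous fun θ => G (circleMap 0 r θ) :=
    hG.continuousOn.comp_continuous (continuous_circleMap 0 r) fun θ => by
      rw [mem_closedBall_zero_iff, norm_circleMap_zero, abs_of_pos hr₀]
  have hpoint : ∀ θ : ℝ, ‖deriv (circleMap 0 r) θ • (circleMap 0 r θ - z)⁻¹ • G (circleMap 0 r θ)‖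
      ≤ r / (r - ‖z‖) * ‖G (circleMap 0 r θ)‖ := by
    intro θ
    have hdist : r - ‖z‖ ≤ ‖circleMap 0 r θ - z‖ := by
      simpa [norm_circleMap_zero, abs_of_pos hr₀] using norm_sub_norm_le (circleMap 0 r θ) z
    rw [deriv_circleMap, norm_smul, norm_smul, norm_mul, norm_circleMap_zero, abs_of_pos hr₀,
      norm_I, mul_one, norm_inv, ← mul_assoc, div_eq_mul_inv]
    gcongr
  have hbound := intervalIntegral.norm_integral_le_of_norm_le Real.two_pi_pos.le
    (ae_of_all _ fun θ _ => hpoint θ)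
    ((hcont.norm.const_mul _).intervalIntegrable (μ := volume) 0 (2 * π))
  have hcauchy := hG.circleIntegral_sub_inv_smul (mem_ball_zero_iff.2 hz)
  unfold circleIntegral at hcauchy
  rw [hcauchy, norm_smul, intervalIntegral.integral_const_mul] at hbound
  have h2π : ‖(2 * π * I : ℂ)‖ = 2 * π := by simp [Real.pi_pos.le]
  rw [h2π] at hbound
  rwa [mul_comm (2 * π), ← div_div, div_mul_eq_mul_div, le_div_iff₀' Real.two_pi_pos]

theorem MemHardy.exists_norm_mul_one_sub_norm_le {G : ℂ → ℂ}
    (hG : DifferentiableOn ℂ G (ball 0 1)) (hH : MemHardy 1 G) :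
    ∃ C, ∀ z ∈ ball (0 : ℂ) 1, ‖G z‖ * (1 - ‖z‖) ≤ C := by
  set M := ⨆ r ∈ Ico (0 : ℝ) 1, ∫⁻ θ in Ioc (0 : ℝ) (2 * π),
    (‖G ((r : ℂ) * exp ((θ : ℂ) * I))‖₊ : ℝ≥0∞) ^ (1 : ℝ)
  have hmean : ∀ r ∈ Ico (0 : ℝ) 1, ∫ θ in 0..2 * π, ‖G (circleMap 0 r θ)‖ ≤ M.toReal := by
    intro r hr
    have hcont : Continuous fun θ => G (circleMap 0 r θ) :=
      hG.continuousOn.comp_continuous (continuous_circleMap 0 r) fun θ => by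
        rw [mem_ball_zero_iff, norm_circleMap_zero, abs_of_nonneg hr.1]
        exact hr.2
    rw [intervalIntegral.integral_of_le Real.two_pi_pos.le,
      integral_norm_eq_lintegral_enorm hcont.aestronglyMeasurable]
    refine ENNReal.toReal_mono hH.ne (le_iSup₂_of_le r hr (le_of_eq ?_))
    simp only [circleMap_zero, ENNReal.rpow_one, enorm_eq_nnnorm]
  refine ⟨M.toReal / π, fun z hz => ?_⟩
  rw [mem_ball_zero_iff] at hz
  set r := (1 + ‖z‖) / 2 with hr
  have hcauchy := norm_le_mul_integral_norm_circleMap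
    (hG.mono (closedBall_subset_ball (show r < 1 by linarith))) (show ‖z‖ < r by linarith)
  have hK : r / (2 * π * (r - ‖z‖)) * (1 - ‖z‖) = r / π := by
    have : 1 - ‖z‖ ≠ 0 := (sub_pos.2 hz).ne'
    rw [show r - ‖z‖ = (1 - ‖z‖) / 2 by rw [hr]; ring]
    field_simp
  calc ‖G z‖ * (1 - ‖z‖)
      ≤ (r / (2 * π * (r - ‖z‖)) * ∫ θ in 0..2 * π, ‖G (circleMap 0 r θ)‖) * (1 - ‖z‖) :=
        mul_le_mul_of_nonneg_right hcauchy (by linarith)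
    _ = r / π * ∫ θ in 0..2 * π, ‖G (circleMap 0 r θ)‖ := by rw [mul_right_comm, hK]
    _ ≤ r / π * M.toReal := mul_le_mul_of_nonneg_left (hmean r ⟨by positivity, by linarith⟩)
        (by positivity)
    _ ≤ M.toReal / π := by
        rw [div_mul_eq_mul_div]
        gcongr
        exact mul_le_of_le_one_left ENNReal.toReal_nonneg (by linarith)

theorem norm_one_sub_conj_mul_sq_mul_one_sub_norm_div_sq {w ζ : ℂ} (hD : 1 - conj w * ζ ≠ 0) :
    ‖1 - conj w * ζ‖ ^ 2 * (1 - ‖(w - ζ) / (1 - conj w * ζ)‖ ^ 2) =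
      (1 - ‖w‖ ^ 2) * (1 - ‖ζ‖ ^ 2) := by
  rw [norm_div, div_pow, mul_sub, mul_div_cancel₀ _ (pow_ne_zero 2 (norm_ne_zero_iff.2 hD)),
    mul_one]
  simp only [← normSq_eq_norm_sq, normSq_apply, sub_re, sub_im, mul_re, mul_im, conj_re, conj_im,
    one_re, one_im]
  ring

theorem one_sub_norm_le_norm_one_sub_conj_mul (w : ℂ) {ζ : ℂ} (hζ : ‖ζ‖ ≤ 1) :
    1 - ‖w‖ ≤ ‖1 - conj w * ζ‖ :=
  calc 1 - ‖w‖ ≤ 1 - ‖conj w * ζ‖ := by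
        rw [norm_mul, RCLike.norm_conj]
        nlinarith [norm_nonneg w, norm_nonneg ζ]
    _ ≤ ‖1 - conj w * ζ‖ := by simpa using norm_sub_norm_le 1 (conj w * ζ)

theorem mul_one_sub_norm_le_of_mapsTo_ball {F : ℂ → ℂ} (hd : DifferentiableOn ℂ F (ball 0 1))
    (hm : MapsTo F (ball 0 1) (ball 0 1)) {u : ℂ} (hu : u ∈ ball (0 : ℂ) 1) :
    (1 - ‖F 0‖) * (1 - ‖u‖) ≤ 4 * (1 - ‖F u‖) := by
  set w := F 0
  have hw : ‖w‖ < 1 := mem_ball_zero_iff.1 (hm (mem_ball_self one_pos))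
  have hden : ∀ ζ ∈ ball (0 : ℂ) 1, 1 - ‖w‖ ≤ ‖1 - conj w * ζ‖ := fun ζ hζ =>
    one_sub_norm_le_norm_one_sub_conj_mul w (mem_ball_zero_iff.1 hζ).le
  have hD : ∀ ζ ∈ ball (0 : ℂ) 1, 1 - conj w * ζ ≠ 0 := fun ζ hζ =>
    norm_pos_iff.1 (by linarith [hden ζ hζ])
  -- `M` is the disk automorphism exchanging `w` and `0`
  set M : ℂ → ℂ := fun ζ => (w - ζ) / (1 - conj w * ζ)
  have hM : ∀ ζ ∈ ball (0 : ℂ) 1,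
      ‖1 - conj w * ζ‖ ^ 2 * (1 - ‖M ζ‖ ^ 2) = (1 - ‖w‖ ^ 2) * (1 - ‖ζ‖ ^ 2) := fun ζ hζ =>
    norm_one_sub_conj_mul_sq_mul_one_sub_norm_div_sq (hD ζ hζ)
  have hMmaps : MapsTo (M ∘ F) (ball 0 1) (closedBall 0 1) := by
    intro z hz
    have hFz := mem_ball_zero_iff.1 (hm hz)
    have hrhs : 0 ≤ (1 - ‖w‖ ^ 2) * (1 - ‖F z‖ ^ 2) :=
      mul_nonneg (by nlinarith [norm_nonneg w]) (by nlinarith [norm_nonneg (F z)])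
    rw [← hM (F z) (hm hz)] at hrhs
    have hM1 := (mul_nonneg_iff_of_pos_left (pow_pos (by linarith [hden (F z) (hm hz)]) 2)).1 hrhs
    rw [mem_closedBall_zero_iff, Function.comp_apply]
    nlinarith [norm_nonneg (M (F z))]
  have hMd : DifferentiableOn ℂ (M ∘ F) (ball 0 1) := fun z hz =>
    ((differentiableWithinAt_const w).sub (hd z hz)).div
      ((differentiableWithinAt_const 1).sub ((differentiableWithinAt_const _).mul (hd z hz)))
      (hD _ (hm hz))
  have hschwarz : ‖M (F u)‖ ≤ ‖u‖ :=
    Complex.norm_le_norm_of_mapsTo_ball hMd hMmaps (by simp [M, w]) (mem_ball_zero_iff.1 hu)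
  have h := hM (F u) (hm hu)
  have hFu := mem_ball_zero_iff.1 (hm hu)
  have hu' := mem_ball_zero_iff.1 hu
  have h1 : (1 - ‖w‖) ^ 2 * (1 - ‖u‖ ^ 2) ≤ ‖1 - conj w * F u‖ ^ 2 * (1 - ‖M (F u)‖ ^ 2) :=
    mul_le_mul (pow_le_pow_left₀ (by linarith) (hden _ (hm hu)) 2)
      (by nlinarith [norm_nonneg (M (F u))]) (by nlinarith [norm_nonneg u]) (sq_nonneg _)
  have h2 : (1 - ‖w‖) * (1 - ‖u‖ ^ 2) ≤ (1 + ‖w‖) * (1 - ‖F u‖ ^ 2) := by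
    refine le_of_mul_le_mul_left ?_ (show 0 < 1 - ‖w‖ by linarith)
    linear_combination h1 + h
  have hW := norm_nonneg w
  have hZ := norm_nonneg (F u)
  nlinarith [mul_nonneg (mul_nonneg (sub_nonneg.2 hw.le) (norm_nonneg u)) (sub_nonneg.2 hu'.le),
    mul_nonneg (sub_nonneg.2 hFu.le) (show 0 ≤ 4 - (1 + ‖w‖) * (1 + ‖F u‖) by nlinarith)]

theorem not_injOn_pow_of_mem_nhds {n : ℕ} (hn : 2 ≤ n) {s : Set ℂ} (hs : s ∈ 𝓝 0) :
    ¬ InjOn (· ^ n) s := by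
  intro hinj
  obtain ⟨ε, hε, hball⟩ := Metric.mem_nhds_iff.1 hs
  have hω := Complex.isPrimitiveRoot_exp n (by omega)
  set ω := exp (2 * π * I / n)
  set ζ : ℂ := ((ε / 2 : ℝ) : ℂ)
  have hζ : ‖ζ‖ < ε := by simp [ζ, abs_of_pos hε]; linarith
  have hζ₀ : ζ ≠ 0 := by simp [ζ, hε.ne']
  have hζω : ‖ζ * ω‖ < ε := by rwa [norm_mul, hω.norm'_eq_one (by omega), mul_one]
  have heq := hinj (hball (mem_ball_zero_iff.2 hζω)) (hball (mem_ball_zero_iff.2 hζ))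
    (show (ζ * ω) ^ n = ζ ^ n by rw [mul_pow, hω.pow_eq_one, mul_one])
  exact hω.ne_one (by omega) (mul_left_cancel₀ hζ₀ (heq.trans (mul_one ζ).symm))

theorem AnalyticAt.exists_analyticAt_pow_eq {g : ℂ → ℂ} {z₀ : ℂ} (hg : AnalyticAt ℂ g z₀)
    (hg₀ : g z₀ ≠ 0) {n : ℕ} (hn : n ≠ 0) :
    ∃ ρ : ℂ → ℂ, AnalyticAt ℂ ρ z₀ ∧ ∀ z, g z = ρ z ^ n := by
  refine ⟨fun z => g z₀ ^ (n⁻¹ : ℂ) * (g z / g z₀) ^ (n⁻¹ : ℂ), ?_, fun z => ?_⟩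
  · refine analyticAt_const.mul ((hg.div analyticAt_const hg₀).cpow analyticAt_const ?_)
    simp [hg₀]
  · rw [mul_pow, cpow_nat_inv_pow _ hn, cpow_nat_inv_pow _ hn, mul_div_cancel₀ _ hg₀]

theorem analyticOrderAt_sub_ne_top_of_injOn {h : ℂ → ℂ} {U : Set ℂ} {z₀ : ℂ} (hU : U ∈ 𝓝 z₀)
    (hi : InjOn h U) : analyticOrderAt (h · - h z₀) z₀ ≠ ⊤ := by
  rw [Ne, analyticOrderAt_eq_top]
  intro hev
  obtain ⟨z, ⟨hz, hzU⟩, hne⟩ := ((hev.and hU).filter_mono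
    (nhdsWithin_le_nhds (s := {z₀}ᶜ)) |>.and self_mem_nhdsWithin).exists
  exact hne (hi hzU (mem_of_mem_nhds hU) (sub_eq_zero.1 hz))

theorem AnalyticAt.two_le_analyticOrderAt_sub {h : ℂ → ℂ} {z₀ : ℂ} (hA : AnalyticAt ℂ h z₀)
    (hder : deriv h z₀ = 0) : 2 ≤ analyticOrderAt (h · - h z₀) z₀ := by
  have hderiv : analyticOrderAt (deriv h) z₀ ≠ 0 := by
    simp [analyticOrderAt_eq_zero, hA.deriv, hder]
  rw [← hA.analyticOrderAt_deriv_add_one, ← one_add_one_eq_two]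
  gcongr
  exact Order.one_le_iff_ne_zero.2 hderiv

theorem deriv_ne_zero_of_injOn {h : ℂ → ℂ} {U : Set ℂ} (hU : IsOpen U)
    (hd : DifferentiableOn ℂ h U) (hi : InjOn h U) {z₀ : ℂ} (hz₀ : z₀ ∈ U) :
    deriv h z₀ ≠ 0 := by
  intro hder
  have hA : AnalyticAt ℂ h z₀ := hd.analyticAt (hU.mem_nhds hz₀)
  obtain ⟨n, hn⟩ :=
    ENat.ne_top_iff_exists.1 (analyticOrderAt_sub_ne_top_of_injOn (hU.mem_nhds hz₀) hi)
  have hn₂ : 2 ≤ n := by exact_mod_cast hn ▸ hA.two_le_analyticOrderAt_sub hder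
  obtain ⟨g, hg, hg₀, hfg⟩ := (hA.sub analyticAt_const).analyticOrderAt_eq_natCast.1 hn.symm
  obtain ⟨ρ, hρ, hgρ⟩ := hg.exists_analyticAt_pow_eq hg₀ (n := n) (by omega)
  -- near `z₀`, `h - h z₀` is the `n`-th power of the local coordinate `φ`
  set φ : ℂ → ℂ := fun z => (z - z₀) * ρ z
  have hφ : HasStrictDerivAt φ (ρ z₀) z₀ := by
    simpa using HasStrictDerivAt.fun_mul
      (HasStrictDerivAt.fun_sub (hasStrictDerivAt_id z₀) (hasStrictDerivAt_const z₀ z₀))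
      hρ.hasStrictDerivAt
  have hρ₀ : ρ z₀ ≠ 0 := fun h0 => hg₀ (by rw [hgρ, h0, zero_pow (by omega)])
  have hfφ : ∀ᶠ z in 𝓝 z₀, h z - h z₀ = φ z ^ n := by
    filter_upwards [hfg] with z hz
    calc h z - h z₀ = (z - z₀) ^ n • g z := hz
      _ = φ z ^ n := by rw [hgρ, smul_eq_mul, ← mul_pow]
  refine not_injOn_pow_of_mem_nhds hn₂ (s := φ '' {z | z ∈ U ∧ h z - h z₀ = φ z ^ n}) ?_ ?_
  · have := image_mem_map (m := φ) (hU.eventually_mem hz₀ |>.and hfφ)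
    rwa [hφ.map_nhds_eq hρ₀, show φ z₀ = 0 by simp [φ]] at this
  · rintro _ ⟨z₁, ⟨hz₁, h₁⟩, rfl⟩ _ ⟨z₂, ⟨hz₂, h₂⟩, rfl⟩ heq
    simp only at heq
    rw [← h₁, ← h₂, sub_left_inj] at heq
    rw [hi hz₁ hz₂ heq]

theorem differentiableAt_invFunOn_of_injOn {h : ℂ → ℂ} {U : Set ℂ} (hU : IsOpen U)
    (hd : DifferentiableOn ℂ h U) (hi : InjOn h U) {w : ℂ} (hw : w ∈ h '' U) :
    DifferentiableAt ℂ (Function.invFunOn h U) w := by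
  obtain ⟨z, hz, rfl⟩ := hw
  have hA : AnalyticAt ℂ h z := hd.analyticAt (hU.mem_nhds hz)
  exact HasDerivAt.differentiableAt <| HasStrictDerivAt.hasDerivAt <|
    hA.hasStrictDerivAt.to_local_left_inverse (deriv_ne_zero_of_injOn hU hd hi hz)
      (eventually_of_mem (hU.mem_nhds hz) fun x hx => hi.leftInvOn_invFunOn hx)

/-- A conformal map of the unit disk onto the sector `S(θ - δ, θ + δ)`. -/
def sectorMap (θ δ : ℝ) (u : ℂ) : ℂ := exp (θ * I + (2 * δ / π : ℝ) * log ((1 + u) / (1 - u)))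

theorem one_sub_ne_zero_of_mem_ball {u : ℂ} (hu : u ∈ ball (0 : ℂ) 1) : 1 - u ≠ 0 := by
  rw [sub_ne_zero]
  rintro rfl
  simp at hu

theorem re_one_add_div_one_sub_pos {u : ℂ} (hu : u ∈ ball (0 : ℂ) 1) :
    0 < ((1 + u) / (1 - u)).re := by
  have hu' : normSq u < 1 := by
    rw [normSq_eq_norm_sq]
    nlinarith [mem_ball_zero_iff.1 hu, norm_nonneg u]
  rw [div_re, ← add_div]
  refine div_pos ?_ (normSq_pos.2 (one_sub_ne_zero_of_mem_ball hu))
  simp only [normSq_apply, add_re, add_im, sub_re, sub_im, one_re, one_im] at hu' ⊢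
  nlinarith

theorem differentiableOn_sectorMap (θ δ : ℝ) : DifferentiableOn ℂ (sectorMap θ δ) (ball 0 1) := by
  intro u hu
  have hslit : (1 + u) / (1 - u) ∈ slitPlane :=
    mem_slitPlane_iff.2 (Or.inl (re_one_add_div_one_sub_pos hu))
  refine DifferentiableAt.differentiableWithinAt <| DifferentiableAt.cexp <|
    (differentiableAt_const _).add <| (differentiableAt_const _).mul <|
      DifferentiableAt.clog ?_ hslit
  exact ((differentiableAt_const _).add differentiableAt_id).div
    ((differentiableAt_const _).sub differentiableAt_id) (one_sub_ne_zero_of_mem_ball hu)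

theorem mapsTo_sectorMap {θ δ : ℝ} (hδ : 0 < δ) (hlo : -π ≤ θ - δ) (hhi : θ + δ ≤ π) :
    MapsTo (sectorMap θ δ) (ball 0 1) (sector (θ - δ) (θ + δ)) := by
  intro u hu
  set v := (1 + u) / (1 - u)
  have hv : |arg v| < π / 2 :=
    abs_arg_lt_pi_div_two_iff.2 (Or.inl (re_one_add_div_one_sub_pos hu))
  have hδv : |2 * δ / π * arg v| < δ := by
    rw [abs_mul, abs_of_pos (by positivity)]
    calc 2 * δ / π * |arg v| < 2 * δ / π * (π / 2) := by gcongr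
      _ = δ := by field_simp
  have hδv' := abs_lt.1 hδv
  have harg : arg (sectorMap θ δ u) = θ + 2 * δ / π * arg v := by
    have him : (θ * I + (2 * δ / π : ℝ) * log v).im = θ + 2 * δ / π * arg v := by simp [log_im]
    rw [sectorMap, arg_exp, him, toIocMod_eq_self]
    constructor <;> linarith
  refine ⟨exp_ne_zero _, ?_, ?_⟩ <;> rw [harg] <;> linarith

theorem sectorMap_ofReal (θ δ : ℝ) {t : ℝ} (ht : 0 < t) :
    sectorMap θ δ ((t - 1) / (t + 1) : ℝ) = (t ^ (2 * δ / π) : ℝ) * exp (θ * I) := by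
  have hcayley : (1 + ((t - 1) / (t + 1) : ℝ)) / (1 - ((t - 1) / (t + 1) : ℝ)) = (t : ℂ) := by
    have : (t : ℂ) + 1 ≠ 0 := by exact_mod_cast (show t + 1 ≠ 0 by linarith)
    push_cast
    field_simp
    ring
  rw [sectorMap, hcayley, ← ofReal_log ht.le, Real.rpow_def_of_pos ht, ofReal_exp,
    ← Complex.exp_add]
  push_cast
  ring_nf

theorem one_div_le_one_sub_norm_ofReal {t : ℝ} (ht : 1 ≤ t) :
    1 / t ≤ 1 - ‖(((t - 1) / (t + 1) : ℝ) : ℂ)‖ := by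
  rw [norm_real, Real.norm_of_nonneg (div_nonneg (by linarith) (by linarith)),
    one_sub_div (by linarith), div_le_div_iff₀ (by linarith) (by linarith)]
  linarith

theorem exists_mul_one_sub_norm_le_of_mapsTo {h Ψ : ℂ → ℂ} (hd : DifferentiableOn ℂ h (ball 0 1))
    (hi : InjOn h (ball 0 1)) (hΨ : DifferentiableOn ℂ Ψ (ball 0 1))
    (hmaps : MapsTo Ψ (ball 0 1) (h '' ball 0 1)) :
    ∃ c > 0, ∀ u ∈ ball (0 : ℂ) 1, ∃ z ∈ ball (0 : ℂ) 1, h z = Ψ u ∧ c * (1 - ‖u‖) ≤ 1 - ‖z‖ := by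
  set F := Function.invFunOn h (ball 0 1) ∘ Ψ
  have hFmaps : MapsTo F (ball 0 1) (ball 0 1) := fun u hu => Function.invFunOn_mem (hmaps hu)
  have hFd : DifferentiableOn ℂ F (ball 0 1) := fun u hu =>
    (differentiableAt_invFunOn_of_injOn isOpen_ball hd hi (hmaps hu)).comp_differentiableWithinAt
      u (hΨ u hu)
  have hF₀ := mem_ball_zero_iff.1 (hFmaps (mem_ball_self one_pos))
  refine ⟨(1 - ‖F 0‖) / 4, by linarith, fun u hu =>
    ⟨F u, hFmaps hu, Function.invFunOn_eq (hmaps hu), ?_⟩⟩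
  linarith [mul_one_sub_norm_le_of_mapsTo_ball hFd hFmaps hu]

theorem tendsto_exp_mul_rpow_div_atTop {κ s : ℝ} (hκ : 0 < κ) (hs : 0 < s) :
    Tendsto (fun t => Real.exp (κ * t ^ s) / t) atTop atTop := by
  refine ((tendsto_exp_mul_div_rpow_atTop s⁻¹ κ hκ).comp (tendsto_rpow_atTop hs)).congr' ?_
  filter_upwards [eventually_ge_atTop 0] with t ht
  simp [← Real.rpow_mul ht, mul_inv_cancel₀ hs.ne']

theorem not_memHardy_exp_mul {h : ℂ → ℂ} (hd : DifferentiableOn ℂ h (ball 0 1))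
    (hi : InjOn h (ball 0 1)) {θ δ : ℝ} (hδ : 0 < δ)
    (hmaps : MapsTo (sectorMap θ δ) (ball 0 1) (h '' ball 0 1)) {lam : ℂ}
    (hlam : 0 < (lam * exp (θ * I)).re) {p : ℝ} (hp : 0 < p) :
    ¬ MemHardy p (fun z => exp (lam * h z)) := by
  intro hH
  have hGd : DifferentiableOn ℂ (fun z => exp (p * (lam * h z))) (ball 0 1) := fun z hz =>
    (((hd z hz).const_mul lam).const_mul _).cexp
  obtain ⟨C, hC⟩ := ((memHardy_exp_iff hp).1 hH).exists_norm_mul_one_sub_norm_le hGd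
  obtain ⟨c, hc, hpre⟩ :=
    exists_mul_one_sub_norm_le_of_mapsTo hd hi (differentiableOn_sectorMap θ δ) hmaps
  set κ := p * (lam * exp (θ * I)).re with hκ
  set s := 2 * δ / π with hs
  have hbound : ∀ t ≥ 1, c * (Real.exp (κ * t ^ s) / t) ≤ C := by
    intro t ht
    have hu := one_div_le_one_sub_norm_ofReal ht
    obtain ⟨z, hz, hhz, hcz⟩ :=
      hpre _ (mem_ball_zero_iff.2 (by linarith [one_div_pos.2 (by linarith : (0 : ℝ) < t)]))
    have hGz : ‖exp (p * (lam * h z))‖ = Real.exp (κ * t ^ s) := by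
      rw [hhz, sectorMap_ofReal θ δ (by linarith), norm_exp, mul_left_comm lam, re_ofReal_mul,
        re_ofReal_mul, hκ, hs]
      congr 1
      ring
    calc c * (Real.exp (κ * t ^ s) / t) = Real.exp (κ * t ^ s) * (c * (1 / t)) := by ring
      _ ≤ ‖exp (p * (lam * h z))‖ * (1 - ‖z‖) := by
        rw [hGz]
        gcongr
        exact (mul_le_mul_of_nonneg_left hu hc.le).trans hcz
      _ ≤ C := hC z hz
  have hgrowth := (tendsto_exp_mul_rpow_div_atTop (mul_pos hp hlam) (by positivity : 0 < s))
    |>.const_mul_atTop hc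
  obtain ⟨t, ht, htC⟩ := ((eventually_ge_atTop 1).and (hgrowth.eventually_gt_atTop C)).exists
  exact (hbound t ht).not_gt htC

theorem hardy_spectrum_sector_general
    (a b : ℝ) (ha : -Real.pi ≤ a) (hb : b ≤ Real.pi)
    (hab_pos : 0 < b - a)
    (h : ℂ → ℂ) (hKoenigs : IsKoenigsMap h (sector a b))
    (p : ℝ) (hp : 1 ≤ p) (lam : ℂ) :
    MemHardy p (fun z => Complex.exp (lam * h z)) ↔
      (lam = 0 ∨ ∃ ρ : ℝ, 0 < ρ ∧ ∃ φ : ℝ,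
        Real.pi / 2 - a ≤ φ ∧ φ ≤ 3 * Real.pi / 2 - b ∧
        lam = (ρ : ℂ) * Complex.exp ((φ : ℂ) * Complex.I)) := by
  obtain ⟨hd, hi, himage⟩ := hKoenigs
  rw [← forall_re_mul_exp_nonpos_iff (sub_pos.1 hab_pos)]
  constructor
  · intro hH θ hθ
    by_contra! hpos
    have hδ : 0 < min (θ - a) (b - θ) := lt_min (sub_pos.2 hθ.1) (sub_pos.2 hθ.2)
    have hδa := min_le_left (θ - a) (b - θ)
    have hδb := min_le_right (θ - a) (b - θ)
    have hmaps := mapsTo_sectorMap (θ := θ) hδ (by linarith) (by linarith)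
    refine not_memHardy_exp_mul hd hi hδ (hmaps.mono_right ?_) hpos (by linarith) hH
    rw [himage]
    exact fun w ⟨hw, hw₁, hw₂⟩ => ⟨hw, by linarith, by linarith⟩
  · intro H
    refine memHardy_of_norm_le (by linarith) (C := 1) fun z hz => ?_
    rw [norm_exp, Real.exp_le_one_iff]
    exact re_mul_nonpos_of_mem_sector H (himage ▸ mem_image_of_mem h hz)

/-- **Lemma 5.6(a).** If `h` is a Koenigs map onto the sector `S(a,b)` with
`-π ≤ a ≤ 0 ≤ b ≤ π` and `0 < b - a < π`, then for `p ≥ 1` the point spectrum on `H^p` is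
`i·closure(S(-a, π-b))`: `e^{λh} ∈ H^p` iff `λ = 0` or `λ = ρe^{iφ}` with `ρ > 0` and
`φ ∈ [π/2 - a, 3π/2 - b]`. -/
theorem hardy_spectrum_sector
    (a b : ℝ) (ha : -Real.pi ≤ a) (ha0 : a ≤ 0) (hb0 : 0 ≤ b) (hb : b ≤ Real.pi)
    (hab_pos : 0 < b - a) (hab_lt : b - a < Real.pi)
    (h : ℂ → ℂ) (hKoenigs : IsKoenigsMap h (sector a b))
    (p : ℝ) (hp : 1 ≤ p) (lam : ℂ) :
    MemHardy p (fun z => Complex.exp (lam * h z)) ↔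
      (lam = 0 ∨ ∃ ρ : ℝ, 0 < ρ ∧ ∃ φ : ℝ,
        Real.pi / 2 - a ≤ φ ∧ φ ≤ 3 * Real.pi / 2 - b ∧
        lam = (ρ : ℂ) * Complex.exp ((φ : ℂ) * Complex.I)) :=
  hardy_spectrum_sector_general a b ha hb hab_pos h hKoenigs p hp lam
end
end

section
/- Let -π ≤ a ≤ 0 ≤ b ≤ π with 0 < b - a < π, and let h be a Koenigs map onto the angular sector S(a,b). Then for every λ ∈ ℂ with λ ≠ 0 one has D(e^{λh}) < ∞ if and only if λ = ρ e^{iφ} for some ρ > 0 and φ ∈ (π/2 - a, 3π/2 - b) (open interval); that is, the point spectrum on the Dirichlet space equals iS(-a, π-b) ∪ {0}. (Lemma 3.3(c), the Dirichlet-space sector computation.) -/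
open MeasureTheory Set Complex Metric
open scoped ENNReal NNReal

noncomputable section

/-- The Dirichlet integral `D(f) = ∫_𝔻 |f'(z)|² dA(z)` over the unit disk. -/
def dirichletIntegral (f : ℂ → ℂ) : ℝ≥0∞ :=
  ∫⁻ z in ball (0 : ℂ) 1, (‖deriv f z‖₊ : ℝ≥0∞) ^ 2

open Filter
open scoped Real

/-!
The Dirichlet integral is conformally invariant, so
`D(e^{λh}) = |λ|² ∫_{S(a,b)} e^{2 Re(λw)} dA(w)`. In polar coordinates this is
`∫_a^b ∫_0^∞ r e^{r c(θ)} dr dθ` with `c(θ) = 2 Re(λ e^{iθ})`, which is finite iff `c < 0` on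
`[a, b]`. If instead `c(θ₀) ≥ 0`, then, `c` being `K`-Lipschitz, `c ≥ -K/t` on a window of width
`1/t` at `θ₀`, so the box `(t, 2t) × window` of area one contributes at least `t e^{-2K}` for every
large `t`. Finally `Re(λ e^{iθ}) < 0` on `[a, b]` says that `arg λ + [a, b]` lies in `(π/2, 3π/2)`
modulo `2π`, which is the stated sector since `b - a < π`.
-/

theorem Complex.det_restrictScalars_toSpanSingleton (d : ℂ) :
    ((ContinuousLinearMap.toSpanSingleton ℂ d).restrictScalars ℝ).det = normSq d := by
  simp [ContinuousLinearMap.det, LinearMap.det_restrictScalars, Algebra.norm_complex_eq]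

theorem lintegral_image_eq_lintegral_enorm_deriv_sq_mul {s : Set ℂ} {f f' : ℂ → ℂ}
    (hs : MeasurableSet s) (hf' : ∀ z ∈ s, HasDerivWithinAt f (f' z) s z) (hf : InjOn f s)
    (g : ℂ → ℝ≥0∞) :
    ∫⁻ w in f '' s, g w = ∫⁻ z in s, ‖f' z‖ₑ ^ 2 * g (f z) := by
  rw [lintegral_image_eq_lintegral_abs_det_fderiv_mul volume hs
    (fun z hz => (hf' z hz).hasFDerivWithinAt.restrictScalars ℝ) hf]
  refine setLIntegral_congr_fun hs fun z _ => ?_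
  rw [Complex.det_restrictScalars_toSpanSingleton, abs_of_nonneg (normSq_nonneg _),
    normSq_eq_norm_sq, ENNReal.ofReal_pow (norm_nonneg _), ofReal_norm]

theorem IsKoenigsMap.dirichletIntegral_comp {h F : ℂ → ℂ} {Ω : Set ℂ} (hh : IsKoenigsMap h Ω)
    (hF : ∀ w ∈ Ω, DifferentiableAt ℂ F w) :
    dirichletIntegral (fun z => F (h z)) = ∫⁻ w in Ω, ‖deriv F w‖ₑ ^ 2 := by
  obtain ⟨hdiff, hinj, rfl⟩ := hh
  have hderiv : ∀ z ∈ ball (0 : ℂ) 1, HasDerivAt h (deriv h z) z := fun z hz =>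
    (hdiff.differentiableAt (isOpen_ball.mem_nhds hz)).hasDerivAt
  rw [lintegral_image_eq_lintegral_enorm_deriv_sq_mul measurableSet_ball
    (fun z hz => (hderiv z hz).hasDerivWithinAt) hinj, dirichletIntegral]
  refine setLIntegral_congr_fun measurableSet_ball fun z hz => ?_
  have hchain : deriv (fun z => F (h z)) z = deriv F (h z) * deriv h z :=
    ((hF _ (mem_image_of_mem h hz)).hasDerivAt.comp z (hderiv z hz)).deriv
  rw [← enorm_eq_nnnorm, hchain, enorm_mul, mul_pow, mul_comm]

theorem measurableSet_sector (a b : ℝ) : MeasurableSet (sector a b) :=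
  (measurableSet_singleton 0).compl.inter
    ((measurableSet_lt measurable_const measurable_arg).inter
      (measurableSet_lt measurable_arg measurable_const))

theorem polarCoord_symm_mem_sector_iff {a b : ℝ} {p : ℝ × ℝ}
    (hp : p ∈ polarCoord.target) :
    Complex.polarCoord.symm p ∈ sector a b ↔ p ∈ Ioi 0 ×ˢ Ioo a b := by
  have harg : arg (Complex.polarCoord.symm p) = p.2 := by
    simpa [Complex.polarCoord_apply] using congrArg Prod.snd (Complex.polarCoord.right_inv hp)
  have hne : Complex.polarCoord.symm p ≠ 0 := by
    rw [← norm_ne_zero_iff, Complex.norm_polarCoord_symm, abs_of_pos hp.1]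
    exact hp.1.ne'
  show _ ∧ _ ∧ _ ↔ _ ∧ _ ∧ _
  rw [harg]
  exact ⟨fun h => ⟨hp.1, h.2⟩, fun h => ⟨hne, h.2⟩⟩

theorem lintegral_sector_eq_lintegral_polarCoord {a b : ℝ} (ha : -π ≤ a) (hb : b ≤ π)
    (f : ℂ → ℝ≥0∞) :
    ∫⁻ w in sector a b, f w =
      ∫⁻ p in Ioi 0 ×ˢ Ioo a b, ENNReal.ofReal p.1 * f (Complex.polarCoord.symm p) := by
  have hsub : Ioi 0 ×ˢ Ioo a b ⊆ polarCoord.target := fun p hp =>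
    ⟨hp.1, by linarith [hp.2.1], by linarith [hp.2.2]⟩
  rw [← lintegral_indicator (measurableSet_sector a b), ← Complex.lintegral_comp_polarCoord_symm,
    ← Measure.restrict_restrict_of_subset hsub, ← lintegral_indicator
      (measurableSet_Ioi.prod measurableSet_Ioo)]
  refine setLIntegral_congr_fun polarCoord.open_target.measurableSet fun p hp => ?_
  by_cases hmem : p ∈ Ioi 0 ×ˢ Ioo a b
  · rw [indicator_of_mem hmem, indicator_of_mem ((polarCoord_symm_mem_sector_iff hp).2 hmem),
      smul_eq_mul]
  · rw [indicator_of_notMem hmem,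
      indicator_of_notMem (mt (polarCoord_symm_mem_sector_iff hp).1 hmem), smul_zero]

theorem lintegral_sector_enorm_cexp_mul_sq {a b : ℝ} (ha : -π ≤ a) (hb : b ≤ π) (μ : ℂ) :
    ∫⁻ w in sector a b, ‖cexp (μ * w)‖ₑ ^ 2 =
      ∫⁻ p in Ioi 0 ×ˢ Ioo a b,
        ENNReal.ofReal (p.1 * Real.exp (p.1 * (2 * (μ * exp (p.2 * I)).re))) := by
  rw [lintegral_sector_eq_lintegral_polarCoord ha hb]
  refine setLIntegral_congr_fun (measurableSet_Ioi.prod measurableSet_Ioo) fun p hp => ?_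
  have hw : μ * Complex.polarCoord.symm p = p.1 * (μ * exp (p.2 * I)) := by
    rw [Complex.polarCoord_symm_apply, ofReal_cos, ofReal_sin, ← exp_mul_I]
    ring
  rw [hw, ← ofReal_norm, ← ENNReal.ofReal_pow (norm_nonneg _),
    ← ENNReal.ofReal_mul (le_of_lt hp.1), norm_exp, re_ofReal_mul, ← Real.exp_nat_mul]
  congr 3
  push_cast
  ring

theorem lintegral_enorm_deriv_cexp_const_mul_sq_lt_top_iff {μ : ℂ} (hμ : μ ≠ 0) (ν : Measure ℂ) :
    ∫⁻ w, ‖deriv (fun w => cexp (μ * w)) w‖ₑ ^ 2 ∂ν < ⊤ ↔ ∫⁻ w, ‖cexp (μ * w)‖ₑ ^ 2 ∂ν < ⊤ := by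
  have hderiv : ∀ w, deriv (fun w => cexp (μ * w)) w = μ * cexp (μ * w) := fun w => by
    rw [deriv_cexp (by fun_prop), deriv_const_mul_field, deriv_id'', mul_one, mul_comm]
  simp_rw [hderiv, enorm_mul, mul_pow]
  rw [lintegral_const_mul' _ _ (by simp)]
  exact ⟨fun hx => ENNReal.lt_top_of_mul_ne_top_right hx.ne (by simp [hμ]),
    ENNReal.mul_lt_top (by simp)⟩

theorem exists_Ioo_subset_Ioo_inter_Icc {a b θ₀ w : ℝ} (hθ₀ : θ₀ ∈ Icc a b) (hw : w ≤ b - a) :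
    ∃ α, Ioo α (α + w) ⊆ Ioo a b ∩ Icc (θ₀ - w) (θ₀ + w) := by
  refine ⟨min θ₀ (b - w), fun θ ⟨h₁, h₂⟩ => ?_⟩
  rcases min_cases θ₀ (b - w) with ⟨hmin, _⟩ | ⟨hmin, _⟩ <;> rw [hmin] at h₁ h₂ <;>
    exact ⟨⟨by linarith [hθ₀.1], by linarith⟩, by linarith [hθ₀.2], by linarith⟩

theorem lintegral_mul_exp_mul_lt_top {c : ℝ → ℝ} {a b : ℝ} (hc : ContinuousOn c (Icc a b))
    (hneg : ∀ θ ∈ Icc a b, c θ < 0) :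
    ∫⁻ p in Ioi 0 ×ˢ Ioo a b, ENNReal.ofReal (p.1 * Real.exp (p.1 * c p.2)) < ⊤ := by
  obtain ⟨δ, hδ, hcδ⟩ :=
    isCompact_Icc.exists_forall_le' hc.neg (a := 0) fun θ hθ => neg_pos.2 (hneg θ hθ)
  have hint : IntegrableOn (fun r : ℝ => r * Real.exp (-δ * r)) (Ioi 0) := by
    simpa using integrableOn_rpow_mul_exp_neg_mul_rpow (s := 1) (p := 1) (by norm_num) one_pos hδ
  calc _ ≤ ∫⁻ p in Ioi 0 ×ˢ Ioo a b, ENNReal.ofReal (p.1 * Real.exp (-δ * p.1)) := by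
        refine setLIntegral_mono' (measurableSet_Ioi.prod measurableSet_Ioo) fun p hp => ?_
        have hr : 0 < p.1 := hp.1
        have hcθ : δ ≤ -c p.2 := hcδ p.2 (Ioo_subset_Icc_self hp.2)
        refine ENNReal.ofReal_le_ofReal (mul_le_mul_of_nonneg_left (Real.exp_le_exp.2 ?_) hr.le)
        nlinarith
    _ = (∫⁻ r in Ioi 0, ENNReal.ofReal (r * Real.exp (-δ * r))) * volume (Ioo a b) := by
        rw [Measure.volume_eq_prod, ← Measure.prod_restrict, lintegral_prod _ (by fun_prop)]
        simp only [lintegral_const, Measure.restrict_apply MeasurableSet.univ, univ_inter]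
        exact lintegral_mul_const' _ _ measure_Ioo_lt_top.ne
    _ < ⊤ := ENNReal.mul_lt_top hint.lintegral_lt_top measure_Ioo_lt_top

theorem lintegral_mul_exp_mul_eq_top {c : ℝ → ℝ} {K : ℝ≥0} (hc : LipschitzWith K c) {a b θ₀ : ℝ}
    (hab : a < b) (hθ₀ : θ₀ ∈ Icc a b) (hc₀ : 0 ≤ c θ₀) :
    ∫⁻ p in Ioi 0 ×ˢ Ioo a b, ENNReal.ofReal (p.1 * Real.exp (p.1 * c p.2)) = ⊤ := by
  set J := ∫⁻ p in Ioi 0 ×ˢ Ioo a b, ENNReal.ofReal (p.1 * Real.exp (p.1 * c p.2))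
  have hbox : ∀ t ≥ (b - a)⁻¹, ENNReal.ofReal (t * Real.exp (-(2 * K))) ≤ J := by
    intro t ht
    have htpos : 0 < t := lt_of_lt_of_le (inv_pos.2 (sub_pos.2 hab)) ht
    obtain ⟨α, hα⟩ :=
      exists_Ioo_subset_Ioo_inter_Icc hθ₀ (w := t⁻¹) (inv_le_of_inv_le₀ (sub_pos.2 hab) ht)
    have hvol : volume (Ioo t (2 * t) ×ˢ Ioo α (α + t⁻¹)) = 1 := by
      rw [Measure.volume_eq_prod, Measure.prod_prod, Real.volume_Ioo, Real.volume_Ioo,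
        ← ENNReal.ofReal_mul (by linarith)]
      field_simp
      norm_num
    calc ENNReal.ofReal (t * Real.exp (-(2 * K)))
        = ∫⁻ _ in Ioo t (2 * t) ×ˢ Ioo α (α + t⁻¹), ENNReal.ofReal (t * Real.exp (-(2 * K))) := by
          rw [setLIntegral_const, hvol, mul_one]
      _ ≤ ∫⁻ p in Ioo t (2 * t) ×ˢ Ioo α (α + t⁻¹),
            ENNReal.ofReal (p.1 * Real.exp (p.1 * c p.2)) := by
          refine setLIntegral_mono' (measurableSet_Ioo.prod measurableSet_Ioo)
            fun p ⟨hr, hθ⟩ => ENNReal.ofReal_le_ofReal ?_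
          obtain ⟨-, hθ₁, hθ₂⟩ := hα hθ
          have hlip := (abs_sub_le_iff.1 (hc.dist_le_mul p.2 θ₀)).2
          rw [Real.dist_eq] at hlip
          have hdist : |p.2 - θ₀| ≤ t⁻¹ := abs_le.2 ⟨by linarith, by linarith⟩
          have hlow : -(K * t⁻¹) ≤ c p.2 := by
            nlinarith [mul_le_mul_of_nonneg_left hdist K.2]
          have hr₂ : p.1 * t⁻¹ ≤ 2 := by
            rw [← div_eq_mul_inv, div_le_iff₀ htpos]
            exact hr.2.le
          have hrc : -(2 * K) ≤ p.1 * c p.2 := calc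
            -(2 * K) ≤ -(K * (p.1 * t⁻¹)) := by nlinarith [K.2]
            _ = p.1 * -(K * t⁻¹) := by ring
            _ ≤ p.1 * c p.2 := mul_le_mul_of_nonneg_left hlow (htpos.trans hr.1).le
          exact mul_le_mul hr.1.le (Real.exp_le_exp.2 hrc) (Real.exp_pos _).le (by linarith [hr.1])
      _ ≤ J := lintegral_mono' (Measure.restrict_mono (prod_mono
            (fun r hr => lt_trans htpos hr.1) fun θ hθ => (hα hθ).1) le_rfl) le_rfl
  refine top_unique (le_of_tendsto (ENNReal.tendsto_ofReal_atTop.comp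
    (tendsto_id.atTop_mul_const (Real.exp_pos (-(2 * K))))) ?_)
  filter_upwards [eventually_ge_atTop (b - a)⁻¹] with t ht using hbox t ht

theorem lintegral_mul_exp_mul_lt_top_iff {c : ℝ → ℝ} {K : ℝ≥0} (hc : LipschitzWith K c)
    {a b : ℝ} (hab : a < b) :
    ∫⁻ p in Ioi 0 ×ˢ Ioo a b, ENNReal.ofReal (p.1 * Real.exp (p.1 * c p.2)) < ⊤ ↔
      ∀ θ ∈ Icc a b, c θ < 0 :=
  ⟨fun hJ _ hθ => lt_of_not_ge fun h0 => hJ.ne (lintegral_mul_exp_mul_eq_top hc hab hθ h0),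
    lintegral_mul_exp_mul_lt_top hc.continuous.continuousOn⟩

theorem lipschitzWith_re_mul_exp_ofReal_mul_I (μ : ℂ) :
    LipschitzWith ‖μ‖₊ fun θ : ℝ => (μ * exp (θ * I)).re := by
  refine LipschitzWith.of_dist_le_mul fun x y => ?_
  have hsub : exp (x * I) - exp (y * I) = exp (y * I) * (exp (I * ↑(x - y)) - 1) := by
    rw [mul_sub, mul_one, ← Complex.exp_add]
    push_cast
    ring_nf
  calc dist (μ * exp (x * I)).re (μ * exp (y * I)).re
      ≤ ‖μ * (exp (x * I) - exp (y * I))‖ := by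
        rw [Real.dist_eq, ← sub_re, ← mul_sub]
        exact abs_re_le_norm _
    _ ≤ ‖μ‖ * dist x y := by
        rw [norm_mul, hsub, norm_mul, norm_exp_ofReal_mul_I, one_mul, Real.dist_eq,
          ← Real.norm_eq_abs]
        exact mul_le_mul_of_nonneg_left Real.norm_exp_I_mul_ofReal_sub_one_le (norm_nonneg _)

theorem re_ofReal_mul_exp_mul_I_mul_exp_mul_I (ρ φ θ : ℝ) :
    (ρ * exp (φ * I) * exp (θ * I)).re = ρ * Real.cos (φ + θ) := by
  rw [mul_assoc, ← Complex.exp_add, ← add_mul, ← ofReal_add, re_ofReal_mul, exp_ofReal_mul_I_re]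

theorem Real.mem_Ioo_of_cos_neg {x : ℝ} (hx : x ∈ Icc (π / 2) (5 * π / 2)) (hcos : cos x < 0) :
    x ∈ Ioo (π / 2) (3 * π / 2) := by
  refine ⟨lt_of_le_of_ne hx.1 ?_, lt_of_not_ge fun hx' => hcos.not_ge ?_⟩
  · rintro rfl
    simp at hcos
  · rw [← cos_sub_two_pi]
    exact cos_nonneg_of_mem_Icc ⟨by linarith, by linarith [hx.2]⟩

theorem forall_re_mul_exp_mul_I_neg_iff {μ : ℂ} (hμ : μ ≠ 0) {a b : ℝ} (hab : a ≤ b)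
    (hba : b - a < π) :
    (∀ θ ∈ Icc a b, (μ * exp (θ * I)).re < 0) ↔
      ∃ ρ : ℝ, 0 < ρ ∧ ∃ φ : ℝ, π / 2 - a < φ ∧ φ < 3 * π / 2 - b ∧ μ = ρ * exp (φ * I) := by
  constructor
  · intro hneg
    set φ := toIcoMod Real.two_pi_pos (π / 2 - a) (arg μ)
    have hφ : φ ∈ Ico (π / 2 - a) (π / 2 - a + 2 * π) := toIcoMod_mem_Ico _ _ _
    have hμφ : μ = ‖μ‖ * exp (φ * I) := by
      rw [show φ = arg μ - toIcoDiv Real.two_pi_pos (π / 2 - a) (arg μ) • (2 * π) by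
          rw [← self_sub_toIcoMod, sub_sub_cancel], ofReal_sub, ofReal_zsmul, ofReal_mul,
        ofReal_ofNat, exp_mul_I_periodic.sub_zsmul_eq, norm_mul_exp_arg_mul_I]
    have hcos : ∀ θ ∈ Icc a b, Real.cos (φ + θ) < 0 := fun θ hθ => by
      have h := hneg θ hθ
      rw [hμφ, re_ofReal_mul_exp_mul_I_mul_exp_mul_I] at h
      exact neg_of_mul_neg_right h (norm_nonneg _)
    have ha := Real.mem_Ioo_of_cos_neg ⟨by linarith [hφ.1], by linarith [hφ.2]⟩
      (hcos a ⟨le_rfl, hab⟩)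
    have hb := Real.mem_Ioo_of_cos_neg ⟨by linarith [hφ.1], by linarith [ha.2]⟩
      (hcos b ⟨hab, le_rfl⟩)
    exact ⟨‖μ‖, norm_pos_iff.2 hμ, φ, by linarith [ha.1], by linarith [hb.2], hμφ⟩
  · rintro ⟨ρ, hρ, φ, hφa, hφb, rfl⟩ θ hθ
    rw [re_ofReal_mul_exp_mul_I_mul_exp_mul_I]
    exact mul_neg_of_pos_of_neg hρ
      (Real.cos_neg_of_pi_div_two_lt_of_lt (by linarith [hθ.1]) (by linarith [hθ.2]))

theorem dirichlet_spectrum_sector_general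
    (a b : ℝ) (ha : -Real.pi ≤ a) (hb : b ≤ Real.pi)
    (hab_pos : 0 < b - a) (hab_lt : b - a < Real.pi)
    (h : ℂ → ℂ) (hKoenigs : IsKoenigsMap h (sector a b))
    (lam : ℂ) (hlam : lam ≠ 0) :
    dirichletIntegral (fun z => Complex.exp (lam * h z)) < ⊤ ↔
      (∃ ρ : ℝ, 0 < ρ ∧ ∃ φ : ℝ,
        Real.pi / 2 - a < φ ∧ φ < 3 * Real.pi / 2 - b ∧
        lam = (ρ : ℂ) * Complex.exp ((φ : ℂ) * Complex.I)) := by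
  have hab : a < b := by linarith
  have hlip : LipschitzWith (‖(2 : ℝ)‖₊ * ‖lam‖₊) fun θ : ℝ => 2 * (lam * exp (θ * I)).re :=
    (lipschitzWith_smul (2 : ℝ)).comp (lipschitzWith_re_mul_exp_ofReal_mul_I lam)
  rw [hKoenigs.dirichletIntegral_comp (F := fun w => cexp (lam * w)) fun w _ => by fun_prop,
    lintegral_enorm_deriv_cexp_const_mul_sq_lt_top_iff hlam,
    lintegral_sector_enorm_cexp_mul_sq ha hb,
    ← forall_re_mul_exp_mul_I_neg_iff hlam hab.le hab_lt]
  exact (lintegral_mul_exp_mul_lt_top_iff hlip hab).trans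
    (forall₂_congr fun _ _ => ⟨fun h => by linarith, fun h => by linarith⟩)

/-- **Lemma 3.3(c).** If `h` is a Koenigs map onto the sector `S(a,b)` with
`-π ≤ a ≤ 0 ≤ b ≤ π` and `0 < b - a < π`, then the nonzero point spectrum on the Dirichlet
space is the open rotated sector `iS(-a, π-b)`: for `λ ≠ 0`, `D(e^{λh}) < ∞` iff
`λ = ρe^{iφ}` with `ρ > 0` and `φ ∈ (π/2 - a, 3π/2 - b)`. -/
theorem dirichlet_spectrum_sector
    (a b : ℝ) (ha : -Real.pi ≤ a) (ha0 : a ≤ 0) (hb0 : 0 ≤ b) (hb : b ≤ Real.pi)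
    (hab_pos : 0 < b - a) (hab_lt : b - a < Real.pi)
    (h : ℂ → ℂ) (hKoenigs : IsKoenigsMap h (sector a b))
    (lam : ℂ) (hlam : lam ≠ 0) :
    dirichletIntegral (fun z => Complex.exp (lam * h z)) < ⊤ ↔
      (∃ ρ : ℝ, 0 < ρ ∧ ∃ φ : ℝ,
        Real.pi / 2 - a < φ ∧ φ < 3 * Real.pi / 2 - b ∧
        lam = (ρ : ℂ) * Complex.exp ((φ : ℂ) * Complex.I)) :=
  dirichlet_spectrum_sector_general a b ha hb hab_pos hab_lt h hKoenigs lam hlam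
end
end

section
/- Let -π ≤ a ≤ 0 ≤ b ≤ π with π ≤ b - a ≤ 2π and a < b, and let h be a Koenigs map onto the angular sector S(a,b). Then for every λ ∈ ℂ with λ ≠ 0 one has D(e^{λh}) = ∞; that is, the point spectrum on the Dirichlet space equals {0}. (Lemma 3.3(d).) -/
open MeasureTheory Set Complex Metric
open scoped ENNReal NNReal

noncomputable section

/-! By conformal invariance of the Dirichlet integral,
`D(e^{λh}) = ∫_{S(a,b)} |λ e^{λw}|² dA(w)`. Since `b - a ≥ π`, the sector contains the rotated
half-plane `e^{ia} ℍ`, and inside any half-plane the region `Re(λw) > -1`, where the integrand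
is at least `|λ|² e^{-2}`, has infinite area. -/

theorem lintegral_image_eq_lintegral_normSq_deriv_mul {s : Set ℂ} (hs : IsOpen s) {f : ℂ → ℂ}
    (hf : DifferentiableOn ℂ f s) (hinj : InjOn f s) (g : ℂ → ℝ≥0∞) :
    ∫⁻ w in f '' s, g w = ∫⁻ z in s, ENNReal.ofReal (normSq (deriv f z)) * g (f z) := by
  have hf' : ∀ z ∈ s, HasFDerivWithinAt f
      ((ContinuousLinearMap.smulRight (1 : ℂ →L[ℂ] ℂ) (deriv f z)).restrictScalars ℝ) s z :=
    fun z hz => ((hf.differentiableAt (hs.mem_nhds hz)).hasDerivAt.hasFDerivAt.restrictScalars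
      ℝ).hasFDerivWithinAt
  rw [lintegral_image_eq_lintegral_abs_det_fderiv_mul volume hs.measurableSet hf' hinj g]
  refine setLIntegral_congr_fun hs.measurableSet fun z _ => ?_
  simp [ContinuousLinearMap.det, LinearMap.det_restrictScalars, Algebra.norm_complex_eq,
    abs_of_nonneg (normSq_nonneg _)]

theorem dirichletIntegral_comp_eq_setLIntegral_image {F h : ℂ → ℂ} (hF : Differentiable ℂ F)
    (hh : DifferentiableOn ℂ h (ball 0 1)) (hinj : InjOn h (ball 0 1)) :
    dirichletIntegral (F ∘ h) = ∫⁻ w in h '' ball 0 1, (‖deriv F w‖₊ : ℝ≥0∞) ^ 2 := by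
  rw [lintegral_image_eq_lintegral_normSq_deriv_mul isOpen_ball hh hinj, dirichletIntegral]
  refine setLIntegral_congr_fun measurableSet_ball fun z hz => ?_
  have hhz := hh.differentiableAt (isOpen_ball.mem_nhds hz)
  rw [deriv_comp z (hF (h z)) hhz]
  simp [normSq_eq_norm_sq, enorm_eq_nnnorm, mul_pow, mul_comm]

theorem exp_mul_I_mul_mem_sector {a b : ℝ} (ha : -Real.pi ≤ a) (ha0 : a ≤ 0)
    (hab : Real.pi ≤ b - a) {z : ℂ} (hz : 0 < z.im) : exp (a * I) * z ∈ sector a b := by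
  have hz0 : z ≠ 0 := fun h => by simp [h] at hz
  have harg_pos : 0 < arg z := (arg_nonneg_iff.2 hz.le).lt_of_ne
    fun h => hz.ne' (arg_eq_zero_iff.1 h.symm).2
  have harg_lt : arg z < Real.pi := arg_lt_pi_iff.2 (Or.inr hz.ne')
  have hrot : exp (a * I) * z = ‖z‖ * exp ((a + arg z : ℝ) * I) := by
    conv_lhs => rw [← norm_mul_exp_arg_mul_I z]
    push_cast
    rw [add_mul, Complex.exp_add]
    ring
  have harg : arg (exp (a * I) * z) = a + arg z := by
    rw [hrot, arg_real_mul _ (norm_pos_iff.2 hz0), arg_exp_mul_I, toIocMod_eq_self]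
    constructor <;> linarith
  refine ⟨mul_ne_zero (Complex.exp_ne_zero _) hz0, ?_, ?_⟩ <;> rw [harg] <;> linarith

theorem volume_setOf_nonneg_mul_eq_top (p : ℝ) : volume {x : ℝ | 0 ≤ p * x} = ∞ := by
  rcases le_or_gt 0 p with hp | hp
  · exact measure_mono_top (fun x (hx : 0 ≤ x) => mul_nonneg hp hx) Real.volume_Ici
  · exact measure_mono_top (fun x (hx : x ≤ 0) => mul_nonneg_of_nonpos_of_nonpos hp.le hx)
      Real.volume_Iic

theorem volume_setOf_im_pos_neg_one_lt_re_mul_eq_top (μ : ℂ) :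
    volume {z : ℂ | 0 < z.im ∧ -1 < (μ * z).re} = ∞ := by
  have hδ : 0 < 1 / (1 + |μ.im|) := by positivity
  have hsub : measurableEquivRealProd ⁻¹' ({x | 0 ≤ μ.re * x} ×ˢ Ioo 0 (1 / (1 + |μ.im|)))
      ⊆ {z | 0 < z.im ∧ -1 < (μ * z).re} := by
    rintro z ⟨hre, him_pos, him_lt⟩
    simp only [measurableEquivRealProd_apply, mem_ofPred_eq] at hre him_pos him_lt
    have him_lt' : z.im * (1 + |μ.im|) < 1 := (lt_div_iff₀ (by positivity)).1 him_lt
    have him_le : μ.im * z.im ≤ |μ.im| * z.im :=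
      mul_le_mul_of_nonneg_right (le_abs_self μ.im) him_pos.le
    refine ⟨him_pos, ?_⟩
    rw [mul_re]
    linarith
  refine measure_mono_top hsub ?_
  rw [volume_preserving_equiv_real_prod.measure_preimage_equiv, Measure.volume_eq_prod,
    Measure.prod_prod, volume_setOf_nonneg_mul_eq_top, Real.volume_Ioo, sub_zero,
    ENNReal.top_mul (ENNReal.ofReal_pos.2 hδ).ne']

theorem volume_sector_inter_setOf_neg_one_lt_re_mul_eq_top {a b : ℝ} (ha : -Real.pi ≤ a)
    (ha0 : a ≤ 0) (hab : Real.pi ≤ b - a) (lam : ℂ) :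
    volume (sector a b ∩ {w | -1 < (lam * w).re}) = ∞ := by
  set R := rotation (Circle.exp a)
  have hsub : {z : ℂ | 0 < z.im ∧ -1 < (lam * exp (a * I) * z).re}
      ⊆ R ⁻¹' (sector a b ∩ {w | -1 < (lam * w).re}) := by
    rintro z ⟨hz, hre⟩
    simp only [mem_preimage, R, rotation_apply, Circle.coe_exp]
    refine ⟨exp_mul_I_mul_mem_sector ha ha0 hab hz, ?_⟩
    simpa only [mem_ofPred_eq, mul_assoc] using hre
  rw [← R.measurePreserving.measure_preimage_emb R.toHomeomorph.measurableEmbedding]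
  exact measure_mono_top hsub (volume_setOf_im_pos_neg_one_lt_re_mul_eq_top _)

theorem setLIntegral_sector_nnnorm_deriv_cexp_mul_sq_eq_top {a b : ℝ} (ha : -Real.pi ≤ a)
    (ha0 : a ≤ 0) (hab : Real.pi ≤ b - a) {lam : ℂ} (hlam : lam ≠ 0) :
    ∫⁻ w in sector a b, (‖deriv (fun w => exp (lam * w)) w‖₊ : ℝ≥0∞) ^ 2 = ∞ := by
  set c : ℝ≥0∞ := ENNReal.ofReal (Real.exp (-1) * ‖lam‖) ^ 2
  have hc : c ≠ 0 := pow_ne_zero _ (ENNReal.ofReal_pos.2 (by positivity)).ne'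
  have hle : sector a b ∩ {w | -1 < (lam * w).re}
      ⊆ {w | c ≤ (‖deriv (fun w => exp (lam * w)) w‖₊ : ℝ≥0∞) ^ 2} ∩ sector a b := by
    rintro w ⟨hw, hre⟩
    refine ⟨?_, hw⟩
    have hderiv : deriv (fun w => exp (lam * w)) w = exp (lam * w) * lam := by
      simpa using ((hasDerivAt_id w).const_mul lam).cexp.deriv
    rw [mem_ofPred_eq, hderiv, ← enorm_eq_nnnorm, ← ofReal_norm, norm_mul, norm_exp]
    unfold c
    gcongr
    exact hre.le
  have hmeas : AEMeasurable (fun w => (‖deriv (fun w => exp (lam * w)) w‖₊ : ℝ≥0∞) ^ 2)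
      (volume.restrict (sector a b)) :=
    ((measurable_deriv _).nnnorm.coe_nnreal_ennreal.pow_const 2).aemeasurable
  refine eq_top_iff.2 (le_trans ?_ (mul_meas_ge_le_lintegral₀ hmeas c))
  rw [← ENNReal.mul_top hc, ← volume_sector_inter_setOf_neg_one_lt_re_mul_eq_top ha ha0 hab lam]
  exact mul_le_mul_right (measure_mono hle |>.trans (Measure.le_restrict_apply _ _)) c

theorem dirichlet_spectrum_wide_sector_general
    (a b : ℝ) (ha : -Real.pi ≤ a) (ha0 : a ≤ 0)
    (hab_ge : Real.pi ≤ b - a)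
    (h : ℂ → ℂ) (hKoenigs : IsKoenigsMap h (sector a b))
    (lam : ℂ) (hlam : lam ≠ 0) :
    dirichletIntegral (fun z => Complex.exp (lam * h z)) = ⊤ := by
  obtain ⟨hdiff, hinj, himg⟩ := hKoenigs
  have hexp : Differentiable ℂ fun w => exp (lam * w) := by fun_prop
  rw [show (fun z => exp (lam * h z)) = (fun w => exp (lam * w)) ∘ h from rfl,
    dirichletIntegral_comp_eq_setLIntegral_image hexp hdiff hinj, himg]
  exact setLIntegral_sector_nnnorm_deriv_cexp_mul_sq_eq_top ha ha0 hab_ge hlam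

/-- **Lemma 3.3(d).** If `h` is a Koenigs map onto the sector `S(a,b)` with
`-π ≤ a ≤ 0 ≤ b ≤ π`, `a < b` and `π ≤ b - a ≤ 2π`, then the point spectrum on the Dirichlet
space is `{0}`: `D(e^{λh}) = ∞` for every nonzero `λ`. -/
theorem dirichlet_spectrum_wide_sector
    (a b : ℝ) (ha : -Real.pi ≤ a) (ha0 : a ≤ 0) (hb0 : 0 ≤ b) (hb : b ≤ Real.pi)
    (hab : a < b) (hab_ge : Real.pi ≤ b - a) (hab_le : b - a ≤ 2 * Real.pi)
    (h : ℂ → ℂ) (hKoenigs : IsKoenigsMap h (sector a b))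
    (lam : ℂ) (hlam : lam ≠ 0) :
    dirichletIntegral (fun z => Complex.exp (lam * h z)) = ⊤ :=
  dirichlet_spectrum_wide_sector_general a b ha ha0 hab_ge h hKoenigs lam hlam
end
end
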